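/- Let C be a category with pullbacks, let D be a preorder (a category in which every hom-set has at most one element, i.e. Quiver.IsThin), and let F : C ⥤ D be a functor with a right adjoint G : D ⥤ C whose counit is a natural isomorphism, with unit η. Then for every morphism f : A ⟶ B of C, F sends the canonical morphism from A to the pullback of G.map (F.map f) : G(F A) ⟶ G(F B) along η_B : B ⟶ G(F B) (induced by f and η_A) to an isomorphism. Consequently, when C has all finite limits and colimits, the triple with weak equivalences W = {f | F.map f is an isomorphism}, cofibrations all morphisms, and fibrations W.rlp is a model structure on C. -/

import Mathlib

/-!
Since `D` is thin, `F.map f` is invertible as soon as there is any morphism `B ⟶ G (F A)`: its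
transpose is a morphism `F B ⟶ F A`. The projection `B ×_{GFB} GFA ⟶ GFA` provides one for the
canonical morphism `A ⟶ B ×_{GFB} GFA`, so `F` inverts it. The other projection, a base change
of `G.map (F.map f)`, has the right lifting property with respect to the class `W` of
morphisms inverted by `F`, because by adjunction `w ⧄ G.map p` amounts to
`F.map w ⧄ p`. This factors every morphism as a weak equivalence followed by a fibration; the
retract argument then yields both weak factorization systems, trivial fibrations being exactly
the isomorphisms.
-/

open CategoryTheory CategoryTheory.Limits

universe v₁ v₂ u₁ u₂

section Preliminaries

variable {C : Type u₁} [Category.{v₁} C]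

/-- The right lifting class of a class of morphisms. -/
def MorphismPropertyRLP (S : MorphismProperty C) : MorphismProperty C :=
  fun _ _ g => ∀ ⦃A B : C⦄ (f : A ⟶ B), S f → HasLiftingProperty f g

/-- The left lifting class of a class of morphisms. -/
def MorphismPropertyLLP (S : MorphismProperty C) : MorphismProperty C :=
  fun _ _ f => ∀ ⦃X Y : C⦄ (g : X ⟶ Y), S g → HasLiftingProperty f g

/-- `(L, R)` is a weak factorization system. -/
structure IsWFS (L R : MorphismProperty C) : Prop where
  llp_eq : L = MorphismPropertyLLP R
  rlp_eq : R = MorphismPropertyRLP L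
  factor : ∀ ⦃X Y : C⦄ (f : X ⟶ Y),
    ∃ (Z : C) (l : X ⟶ Z) (r : Z ⟶ Y), L l ∧ R r ∧ l ≫ r = f

/-- The two-out-of-three property for a class of morphisms. -/
def TwoOfThree (W : MorphismProperty C) : Prop :=
  ∀ ⦃X Y Z : C⦄ (f : X ⟶ Y) (g : Y ⟶ Z),
    (W f → W g → W (f ≫ g)) ∧ (W f → W (f ≫ g) → W g) ∧ (W g → W (f ≫ g) → W f)

/-- `(W, Cof, Fib)` is a model structure. -/
structure IsModelStructure (W Cof Fib : MorphismProperty C) : Prop where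
  twoOfThree : TwoOfThree W
  wfs₁ : IsWFS Cof (fun _ _ f => Fib f ∧ W f)
  wfs₂ : IsWFS (fun _ _ f => Cof f ∧ W f) Fib

end Preliminaries

open MorphismProperty

namespace CategoryTheory

section ModelStructure

variable {C : Type u₁} [Category.{v₁} C]

lemma isWFS_of_isWeakFactorizationSystem (L R : MorphismProperty C)
    [L.IsWeakFactorizationSystem R] : IsWFS L R where
  llp_eq := (llp_eq_of_wfs L R).symm
  rlp_eq := (rlp_eq_of_wfs L R).symm
  factor _ _ f :=
    let h := factorizationData L R f
    ⟨h.Z, h.i, h.p, h.hi, h.hp, h.fac⟩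

lemma twoOfThree_of_hasTwoOutOfThreeProperty (W : MorphismProperty C)
    [W.HasTwoOutOfThreeProperty] : TwoOfThree W :=
  fun _ _ _ f g => ⟨W.comp_mem f g, W.of_precomp f g, W.of_postcomp f g⟩

instance : (⊤ : MorphismProperty C).IsStableUnderRetracts where
  of_retract _ _ := trivial

instance : HasFactorization (⊤ : MorphismProperty C) (isomorphisms C) where
  nonempty_mapFactorizationData f :=
    ⟨{ Z := _, i := f, p := 𝟙 _, hi := trivial, hp := (inferInstance : IsIso (𝟙 _)) }⟩

instance : IsWeakFactorizationSystem (⊤ : MorphismProperty C) (isomorphisms C) :=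
  .mk' _ _ fun _ p _ (_ : IsIso p) => inferInstance

lemma isIso_of_rlp_of_mem {W : MorphismProperty C} {X Y : C} {g : X ⟶ Y}
    (hrlp : W.rlp g) (hg : W g) : IsIso g :=
  have := hrlp g hg
  have sq : CommSq (𝟙 X) g g (𝟙 Y) := ⟨by simp⟩
  ⟨sq.lift, sq.fac_left, sq.fac_right⟩

lemma rlp_inf_eq_isomorphisms {W : MorphismProperty C} (hW : isomorphisms C ≤ W) :
    W.rlp ⊓ W = isomorphisms C :=
  le_antisymm (fun _ _ _ hg => isIso_of_rlp_of_mem hg.1 hg.2)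
    fun _ _ g (_ : IsIso g) => ⟨W.rlp_of_isIso g, hW g inferInstance⟩

theorem isModelStructure_of_hasFactorization (W : MorphismProperty C)
    [W.HasTwoOutOfThreeProperty] [W.IsStableUnderRetracts] [HasFactorization W W.rlp]
    (hW : isomorphisms C ≤ W) :
    IsModelStructure W ⊤ (MorphismPropertyRLP W) where
  twoOfThree := twoOfThree_of_hasTwoOutOfThreeProperty W
  wfs₁ := by
    change IsWFS ⊤ (W.rlp ⊓ W)
    rw [rlp_inf_eq_isomorphisms hW]
    exact isWFS_of_isWeakFactorizationSystem _ _
  wfs₂ := by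
    change IsWFS (⊤ ⊓ W) W.rlp
    have : W.IsWeakFactorizationSystem W.rlp := .mk' _ _ fun i _ hi hp => hp i hi
    rw [top_inf_eq]
    exact isWFS_of_isWeakFactorizationSystem _ _

end ModelStructure

namespace Adjunction

variable {C : Type u₁} [Category.{v₁} C] {D : Type u₂} [Category.{v₂} D]
  {F : C ⥤ D} {G : D ⥤ C} (adj : F ⊣ G)
include adj

lemma rlp_inverseImage_isomorphisms_map {X Y : D} (p : X ⟶ Y) :
    ((isomorphisms D).inverseImage F).rlp (G.map p) :=
  fun _ _ w (_ : IsIso (F.map w)) => (adj.hasLiftingProperty_iff w p).1 inferInstance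

lemma rlp_inverseImage_isomorphisms_pullbackFst [HasPullbacks C] {A : C} {X Y : D}
    (u : A ⟶ G.obj Y) (p : X ⟶ Y) :
    ((isomorphisms D).inverseImage F).rlp (pullback.fst u (G.map p)) :=
  of_isPullback (IsPullback.of_hasPullback _ _).flip (adj.rlp_inverseImage_isomorphisms_map p)

variable [Quiver.IsThin D]

lemma isIso_map_of_hom_to_obj {A B : C} (f : A ⟶ B) (k : B ⟶ G.obj (F.obj A)) :
    IsIso (F.map f) :=
  ⟨(adj.homEquiv B (F.obj A)).symm k, Subsingleton.elim _ _, Subsingleton.elim _ _⟩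

lemma isIso_map_pullbackLift_unit [HasPullbacks C] {A B : C} (f : A ⟶ B) :
    IsIso (F.map (pullback.lift f (adj.unit.app A)
      (by simp : f ≫ adj.unit.app B = adj.unit.app A ≫ G.map (F.map f)))) :=
  adj.isIso_map_of_hom_to_obj _ (pullback.snd _ _)

lemma hasFactorization_inverseImage_isomorphisms [HasPullbacks C] :
    HasFactorization ((isomorphisms D).inverseImage F) ((isomorphisms D).inverseImage F).rlp where
  nonempty_mapFactorizationData f :=
    ⟨{ Z := _
       i := pullback.lift f (adj.unit.app _) (by simp)
       p := pullback.fst _ _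
       fac := pullback.lift_fst _ _ _
       hi := adj.isIso_map_pullbackLift_unit f
       hp := adj.rlp_inverseImage_isomorphisms_pullbackFst _ _ }⟩

end Adjunction

end CategoryTheory

/-- If `D` is a preorder and `F : C ⥤ D` has a right adjoint `G` with invertible
counit, then `F` inverts the canonical morphism `A ⟶ B ×_{GFB} GFA` for every
`f : A ⟶ B`; consequently, when `C` is finitely bicomplete, there is a model
structure on `C` with weak equivalences the morphisms inverted by `F`, all morphisms
as cofibrations, and fibrations the right lifting class of the weak equivalences. -/
theorem modelStructure_of_adjoint_section_preorder
    {C : Type u₁} [Category.{v₁} C] {D : Type u₂} [Category.{v₂} D]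
    [Quiver.IsThin D] [HasFiniteLimits C]
    (F : C ⥤ D) (G : D ⥤ C) (adj : F ⊣ G) :
    (∀ ⦃A B : C⦄ (f : A ⟶ B),
      IsIso (F.map (pullback.lift f (adj.unit.app A)
        (by simp : f ≫ adj.unit.app B = adj.unit.app A ≫ G.map (F.map f))))) ∧
    IsModelStructure (fun _ _ f => IsIso (F.map f) : MorphismProperty C)
      (fun _ _ _ => True)
      (MorphismPropertyRLP (fun _ _ f => IsIso (F.map f) : MorphismProperty C)) := by
  have := adj.hasFactorization_inverseImage_isomorphisms
  exact ⟨fun _ _ => adj.isIso_map_pullbackLift_unit,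
    isModelStructure_of_hasFactorization ((isomorphisms D).inverseImage F)
      (isomorphisms_le_of_containsIdentities _)⟩
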